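/- Fix 0 < q < 1 and θ > 0, and parametrize the contour C_{θ,π/4} by W(s) = log_q(q^θ + |s| e^{i(π/4) sgn(s)}). Then for all s > 0, d/ds Re[f_0(W(s))] = Σ_{k=0}^∞ q^{2k} s^2 (√2/2)(q^k s^2 + q^θ(1-q^{θ+k})) / ((1-q^{θ+k})^2 |1-q^{θ+k}-e^{iπ/4} s q^k|^2 |q^θ + e^{iπ/4} s|^2) > 0; in particular s ↦ Re[f_0(W(s))] is strictly increasing on (0,∞). -/

import Mathlib

open Complex Real

/-- The infinite q-Pochhammer symbol `(a; q)_∞ = ∏_{k=0}^∞ (1 - a q^k)`. -/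
noncomputable def qPoch (a q : ℂ) : ℂ := ∏' k : ℕ, (1 - a * q ^ k)

/-- The q-Gamma function `Γ_q(z) = (1-q)^{1-z} (q;q)_∞ / (q^z;q)_∞`. -/
noncomputable def qGamma (q : ℝ) (z : ℂ) : ℂ :=
  ((1 - q : ℂ)) ^ ((1 : ℂ) - z) * qPoch (q : ℂ) (q : ℂ) / qPoch ((q : ℂ) ^ z) (q : ℂ)

/-- The q-digamma function `Ψ_q(z) = d/dz log Γ_q(z)`. -/
noncomputable def qDigamma (q : ℝ) (z : ℂ) : ℂ :=
  deriv (fun w => Complex.log (qGamma q w)) z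

/-- `κ(q,θ) = Ψ'_q(θ) / ((log q)^2 q^θ)`. -/
noncomputable def kappaC (q θ : ℝ) : ℂ :=
  deriv (qDigamma q) (θ : ℂ) / (((Real.log q : ℂ)) ^ 2 * (q : ℂ) ^ (θ : ℂ))

/-- `f(q,θ) = Ψ'_q(θ)/(log q)^2 - Ψ_q(θ)/log q - log(1-q)/log q`. -/
noncomputable def fC (q θ : ℝ) : ℂ :=
  deriv (qDigamma q) (θ : ℂ) / ((Real.log q : ℂ)) ^ 2
    - qDigamma q (θ : ℂ) / (Real.log q : ℂ)
    - (Real.log (1 - q) : ℂ) / (Real.log q : ℂ)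

/-- `f₀(Z) = -f (log q) Z + κ q^Z + log((q^Z; q)_∞)`. -/
noncomputable def f0 (q θ : ℝ) (Z : ℂ) : ℂ :=
  -fC q θ * (Real.log q : ℂ) * Z + kappaC q θ * (q : ℂ) ^ Z
    + Complex.log (qPoch ((q : ℂ) ^ Z) (q : ℂ))

/-- The contour `C_{θ,π/4}`, parametrized by `W(s) = log_q (q^θ + |s| e^{i(π/4) sgn s})`. -/
noncomputable def Wc (q θ : ℝ) (s : ℝ) : ℂ :=
  Complex.log ((q : ℂ) ^ (θ : ℂ) +
    (|s| : ℝ) * Complex.exp (Complex.I * ((Real.pi / 4) * Real.sign s))) / (Real.log q : ℂ)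

/-!
On the half-plane `Re z > 0` one has `Γ_q = exp L` with
`L z = (1 - z) log (1 - q) + log (q; q)_∞ - ∑ₖ log (1 - q^z q^k)`, and `Γ_q` is a positive real on
the positive reals, so `Ψ_q = L'` near `θ`. Differentiating the series termwise expresses the
coefficients through `xₖ = q^(θ+k)`: `f = ∑ xₖ² / (1 - xₖ)²` and `κ = ∑ q^k / (1 - xₖ)²`.

On the contour, `q^W(s) = A(s) := q^θ + e^{iπ/4} s`. As `Re log = log ‖·‖` ignores the branch,
`Re f₀(W s) = Re [-f log A + κ A + ∑ₖ log (1 - A q^k)]`, whose `s`-derivative is the real part of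
`e^{iπ/4} (-f / A + κ - ∑ₖ q^k / (1 - A q^k))`. Since `A - q^θ = e^{iπ/4} s`, the `k`-th terms
combine to `-q^{2k} s² e^{iπ/2} / ((1 - xₖ)² A (1 - A q^k))`, and writing
`1 / (A B) = conj A conj B / (|A|² |B|²)` turns their real parts into the positive summands.
-/

open Topology

section QPochhammer

lemma summable_log_one_sub_mul_pow (a : ℂ) {q : ℂ} (hq : ‖q‖ < 1) :
    Summable fun k : ℕ => log (1 - a * q ^ k) := by
  simpa [sub_eq_add_neg] using
    Complex.summable_log_one_add_of_summable ((summable_geometric_of_norm_lt_one hq).mul_left a).neg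

lemma qPoch_eq_exp_tsum_log {a q : ℂ} (hq : ‖q‖ < 1) (h : ∀ k : ℕ, 1 - a * q ^ k ≠ 0) :
    qPoch a q = exp (∑' k : ℕ, log (1 - a * q ^ k)) :=
  (cexp_tsum_eq_tprod h (summable_log_one_sub_mul_pow a hq)).symm

lemma one_sub_mul_pow_pos {x q : ℝ} (hq0 : 0 ≤ q) (hq1 : q ≤ 1) (hx : x < 1) (k : ℕ) :
    0 < 1 - x * q ^ k := by
  have h0 := pow_nonneg hq0 k
  have h1 := pow_le_one₀ hq0 hq1 (n := k)
  rcases le_or_gt x 0 with hx0 | hx0 <;> nlinarith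

lemma qPoch_ofReal {x q : ℝ} (hq0 : 0 ≤ q) (hq1 : q < 1) (hx : x < 1) :
    qPoch x q = (Real.exp (∑' k : ℕ, Real.log (1 - x * q ^ k)) : ℝ) := by
  have hpos := one_sub_mul_pow_pos hq0 hq1.le hx
  have hq : ‖(q : ℂ)‖ < 1 := by rwa [Complex.norm_real, Real.norm_of_nonneg hq0]
  rw [qPoch_eq_exp_tsum_log hq, Complex.ofReal_exp, Complex.ofReal_tsum]
  · congr 1
    refine tsum_congr fun k => ?_
    rw [Complex.ofReal_log (hpos k).le]
    push_cast
    rfl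
  · exact fun k h => (hpos k).ne' (by exact_mod_cast h)

end QPochhammer

section QDigamma

variable {q : ℝ}

lemma norm_cpow_mul_pow_le (hq0 : 0 < q) (hq1 : q ≤ 1) {z : ℂ} {ε : ℝ} (hz : ε ≤ z.re)
    (k : ℕ) : ‖(q : ℂ) ^ z * (q : ℂ) ^ k‖ ≤ q ^ ε * q ^ k := by
  rw [norm_mul, norm_pow, Complex.norm_cpow_eq_rpow_re_of_pos hq0, Complex.norm_real,
    Real.norm_of_nonneg hq0.le]
  exact mul_le_mul_of_nonneg_right (Real.rpow_le_rpow_of_exponent_ge hq0 hq1 hz)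
    (pow_nonneg hq0.le k)

lemma norm_cpow_mul_pow_lt_one (hq0 : 0 < q) (hq1 : q < 1) {z : ℂ} (hz : 0 < z.re) (k : ℕ) :
    ‖(q : ℂ) ^ z * (q : ℂ) ^ k‖ < 1 :=
  (norm_cpow_mul_pow_le hq0 hq1.le le_rfl k).trans_lt <|
    mul_lt_one_of_nonneg_of_lt_one_left (Real.rpow_nonneg hq0.le _)
      (Real.rpow_lt_one hq0.le hq1 hz) (pow_le_one₀ hq0.le hq1.le)

lemma one_sub_mem_slitPlane {w : ℂ} (hw : ‖w‖ < 1) : 1 - w ∈ slitPlane := by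
  simpa [sub_eq_add_neg] using Complex.mem_slitPlane_of_norm_lt_one (z := -w) (by rwa [norm_neg])

lemma norm_div_one_sub_le {w : ℂ} {r : ℝ} (hw : ‖w‖ ≤ r) (hr : r < 1) :
    ‖w / (1 - w)‖ ≤ ‖w‖ / (1 - r) := by
  have h : 1 - r ≤ ‖1 - w‖ := by
    have := norm_sub_norm_le (1 : ℂ) w
    rw [norm_one] at this
    linarith
  rw [norm_div]
  exact div_le_div_of_nonneg_left (norm_nonneg w) (by linarith) h

lemma hasDerivAt_cpow_mul_pow (hq0 : 0 < q) (k : ℕ) (z : ℂ) :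
    HasDerivAt (fun z => (q : ℂ) ^ z * (q : ℂ) ^ k)
      ((Real.log q : ℂ) * ((q : ℂ) ^ z * (q : ℂ) ^ k)) z := by
  refine (((hasDerivAt_id z).const_cpow (c := (q : ℂ))
    (Or.inl (Complex.ofReal_ne_zero.mpr hq0.ne'))).mul_const ((q : ℂ) ^ k)).congr_deriv ?_
  rw [Complex.ofReal_log hq0.le, id, mul_one]
  ring

lemma cpow_mul_pow_ofReal (hq : 0 ≤ q) (x : ℝ) (k : ℕ) :
    (q : ℂ) ^ (x : ℂ) * (q : ℂ) ^ k = ((q ^ x * q ^ k : ℝ) : ℂ) := by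
  rw [← Complex.ofReal_cpow hq]
  push_cast
  rfl

noncomputable def qDigammaSeries (q : ℝ) (z : ℂ) : ℂ :=
  ∑' k : ℕ, (q : ℂ) ^ z * (q : ℂ) ^ k / (1 - (q : ℂ) ^ z * (q : ℂ) ^ k)

lemma qDigammaSeries_ofReal (hq : 0 ≤ q) (x : ℝ) :
    qDigammaSeries q x = ((∑' k : ℕ, q ^ x * q ^ k / (1 - q ^ x * q ^ k) : ℝ) : ℂ) := by
  rw [qDigammaSeries, Complex.ofReal_tsum]
  simp_rw [cpow_mul_pow_ofReal hq]
  push_cast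
  rfl

lemma norm_cpow_mul_pow_div_one_sub_le (hq0 : 0 < q) (hq1 : q < 1) {ε : ℝ} (hε : 0 < ε)
    {y : ℂ} (hy : ε ≤ y.re) (k : ℕ) :
    ‖(q : ℂ) ^ y * (q : ℂ) ^ k / (1 - (q : ℂ) ^ y * (q : ℂ) ^ k)‖
      ≤ q ^ ε / (1 - q ^ ε) * q ^ k := by
  have hρ : q ^ ε < 1 := Real.rpow_lt_one hq0.le hq1 hε
  have hle := norm_cpow_mul_pow_le hq0 hq1.le hy k
  have hle' : ‖(q : ℂ) ^ y * (q : ℂ) ^ k‖ ≤ q ^ ε :=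
    hle.trans (mul_le_of_le_one_right (Real.rpow_nonneg hq0.le _) (pow_le_one₀ hq0.le hq1.le))
  calc _ ≤ ‖(q : ℂ) ^ y * (q : ℂ) ^ k‖ / (1 - q ^ ε) := norm_div_one_sub_le hle' hρ
    _ ≤ q ^ ε * q ^ k / (1 - q ^ ε) := by gcongr
    _ = q ^ ε / (1 - q ^ ε) * q ^ k := by ring

lemma hasDerivAt_log_one_sub_cpow_mul_pow (hq0 : 0 < q) (hq1 : q < 1) (k : ℕ) {y : ℂ}
    (hy : 0 < y.re) :
    HasDerivAt (fun z => Complex.log (1 - (q : ℂ) ^ z * (q : ℂ) ^ k))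
      (-(Real.log q : ℂ) * ((q : ℂ) ^ y * (q : ℂ) ^ k / (1 - (q : ℂ) ^ y * (q : ℂ) ^ k))) y := by
  have h := ((hasDerivAt_const y (1 : ℂ)).sub (hasDerivAt_cpow_mul_pow hq0 k y)).clog
    (one_sub_mem_slitPlane (norm_cpow_mul_pow_lt_one hq0 hq1 hy k))
  refine h.congr_deriv ?_
  simp only [Pi.sub_apply]
  ring

lemma hasDerivAt_cpow_mul_pow_div_one_sub (hq0 : 0 < q) (hq1 : q < 1) (k : ℕ) {y : ℂ}
    (hy : 0 < y.re) :
    HasDerivAt (fun z => (q : ℂ) ^ z * (q : ℂ) ^ k / (1 - (q : ℂ) ^ z * (q : ℂ) ^ k))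
      ((Real.log q : ℂ) * ((q : ℂ) ^ y * (q : ℂ) ^ k / (1 - (q : ℂ) ^ y * (q : ℂ) ^ k) ^ 2)) y := by
  have hne := Complex.slitPlane_ne_zero
    (one_sub_mem_slitPlane (norm_cpow_mul_pow_lt_one hq0 hq1 hy k))
  have hw := hasDerivAt_cpow_mul_pow hq0 k y
  refine (hw.div ((hasDerivAt_const y (1 : ℂ)).sub hw) hne).congr_deriv ?_
  simp only [Pi.sub_apply]
  field_simp
  ring

section HalfPlane

variable (hq0 : 0 < q) (hq1 : q < 1) {z : ℂ} (hz : 0 < z.re)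
include hq0 hq1 hz

lemma hasDerivAt_tsum_log_one_sub_cpow_mul_pow :
    HasDerivAt (fun z => ∑' k : ℕ, Complex.log (1 - (q : ℂ) ^ z * (q : ℂ) ^ k))
      (-(Real.log q : ℂ) * qDigammaSeries q z) z := by
  have hε : 0 < z.re / 2 := half_pos hz
  have hbound : ∀ (k : ℕ), ∀ y ∈ {y : ℂ | z.re / 2 < y.re},
      ‖-(Real.log q : ℂ) * ((q : ℂ) ^ y * (q : ℂ) ^ k / (1 - (q : ℂ) ^ y * (q : ℂ) ^ k))‖
        ≤ |Real.log q| * (q ^ (z.re / 2) / (1 - q ^ (z.re / 2))) * q ^ k := by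
    intro k y hy
    rw [norm_mul, norm_neg, Complex.norm_real, Real.norm_eq_abs, mul_assoc]
    exact mul_le_mul_of_nonneg_left
      (norm_cpow_mul_pow_div_one_sub_le hq0 hq1 hε (le_of_lt hy) k) (abs_nonneg _)
  have h := hasDerivAt_tsum_of_isPreconnected
    ((summable_geometric_of_lt_one hq0.le hq1).mul_left _)
    (isOpen_lt continuous_const Complex.continuous_re)
    (convex_halfSpace_re_gt _).isPreconnected
    (fun k y hy => hasDerivAt_log_one_sub_cpow_mul_pow hq0 hq1 k (hε.trans hy)) hbound
    (half_lt_self hz)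
    (summable_log_one_sub_mul_pow _ (by simpa [abs_of_pos hq0] using hq1)) (half_lt_self hz)
  rwa [tsum_mul_left] at h

lemma hasDerivAt_qDigammaSeries :
    HasDerivAt (qDigammaSeries q)
      ((Real.log q : ℂ) *
        ∑' k : ℕ, (q : ℂ) ^ z * (q : ℂ) ^ k / (1 - (q : ℂ) ^ z * (q : ℂ) ^ k) ^ 2) z := by
  have hε : 0 < z.re / 2 := half_pos hz
  have hU : IsOpen {y : ℂ | z.re / 2 < y.re} := isOpen_lt continuous_const Complex.continuous_re
  have hzU : z ∈ {y : ℂ | z.re / 2 < y.re} := half_lt_self hz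
  have hu := (summable_geometric_of_lt_one hq0.le hq1).mul_left
    (q ^ (z.re / 2) / (1 - q ^ (z.re / 2)))
  have hbound := fun k y (hy : y ∈ {y : ℂ | z.re / 2 < y.re}) =>
    norm_cpow_mul_pow_div_one_sub_le hq0 hq1 hε (le_of_lt hy) k
  have hdiff : ∀ k : ℕ, DifferentiableOn ℂ
      (fun z => (q : ℂ) ^ z * (q : ℂ) ^ k / (1 - (q : ℂ) ^ z * (q : ℂ) ^ k))
      {y : ℂ | z.re / 2 < y.re} := fun k y hy =>
    (hasDerivAt_cpow_mul_pow_div_one_sub hq0 hq1 k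
      (hε.trans hy)).differentiableAt.differentiableWithinAt
  have hderiv := Complex.hasSum_deriv_of_summable_norm hu hdiff hU hbound hzU
  simp only [(hasDerivAt_cpow_mul_pow_div_one_sub hq0 hq1 _ hz).deriv] at hderiv
  rw [← tsum_mul_left, hderiv.tsum_eq]
  exact ((Complex.differentiableOn_tsum_of_summable_norm hu hdiff hU hbound).differentiableAt
    (hU.mem_nhds hzU)).hasDerivAt

end HalfPlane

end QDigamma

noncomputable def logQGamma (q : ℝ) (z : ℂ) : ℂ :=
  (1 - z) * Complex.log (1 - q) + Complex.log (qPoch q q)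
    - ∑' k : ℕ, Complex.log (1 - (q : ℂ) ^ z * (q : ℂ) ^ k)

section QGamma

variable {q : ℝ} (hq0 : 0 < q) (hq1 : q < 1)
include hq0 hq1

lemma qGamma_eq_exp_logQGamma {z : ℂ} (hz : 0 < z.re) : qGamma q z = exp (logQGamma q z) := by
  have hq : ‖(q : ℂ)‖ < 1 := by rwa [Complex.norm_real, Real.norm_of_nonneg hq0.le]
  have h1q : (1 : ℂ) - q ≠ 0 := by exact_mod_cast (sub_pos.mpr hq1).ne'
  have hqq : qPoch q q ≠ 0 := by
    rw [qPoch_ofReal hq0.le hq1 hq1]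
    exact_mod_cast (Real.exp_pos _).ne'
  rw [qGamma, qPoch_eq_exp_tsum_log hq fun k => Complex.slitPlane_ne_zero
      (one_sub_mem_slitPlane (norm_cpow_mul_pow_lt_one hq0 hq1 hz k)),
    Complex.cpow_def_of_ne_zero h1q, logQGamma, Complex.exp_sub, Complex.exp_add,
    Complex.exp_log hqq, mul_comm (1 - z)]

lemma hasDerivAt_qGamma {z : ℂ} (hz : 0 < z.re) :
    HasDerivAt (qGamma q)
      (qGamma q z * (-Complex.log (1 - q) + (Real.log q : ℂ) * qDigammaSeries q z)) z := by
  have hL : HasDerivAt (logQGamma q)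
      (-Complex.log (1 - q) + (Real.log q : ℂ) * qDigammaSeries q z) z := by
    have h := (((hasDerivAt_const z (1 : ℂ)).sub (hasDerivAt_id z)).mul_const
      (Complex.log (1 - q))).add_const (Complex.log (qPoch q q)) |>.sub
      (hasDerivAt_tsum_log_one_sub_cpow_mul_pow hq0 hq1 hz)
    refine h.congr_deriv ?_
    ring
  have hG : qGamma q =ᶠ[𝓝 z] fun w => exp (logQGamma q w) :=
    Filter.eventuallyEq_of_mem ((isOpen_lt continuous_const Complex.continuous_re).mem_nhds hz)
      fun w hw => qGamma_eq_exp_logQGamma hq0 hq1 hw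
  rw [qGamma_eq_exp_logQGamma hq0 hq1 hz]
  exact hL.cexp.congr_of_eventuallyEq hG

lemma qGamma_ofReal_mem_slitPlane {x : ℝ} (hx : 0 < x) : qGamma q x ∈ slitPlane := by
  have hqx : q ^ x < 1 := Real.rpow_lt_one hq0.le hq1 hx
  rw [qGamma, ← Complex.ofReal_cpow hq0.le, qPoch_ofReal hq0.le hq1 hqx,
    qPoch_ofReal hq0.le hq1 hq1, show (1 : ℂ) - x = ((1 - x : ℝ) : ℂ) by push_cast; rfl,
    show (1 : ℂ) - q = ((1 - q : ℝ) : ℂ) by push_cast; rfl,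
    ← Complex.ofReal_cpow (sub_pos.mpr hq1).le]
  norm_cast
  exact Complex.ofReal_mem_slitPlane.mpr
    (div_pos (mul_pos (Real.rpow_pos_of_pos (sub_pos.mpr hq1) _) (Real.exp_pos _)) (Real.exp_pos _))

lemma qDigamma_eventuallyEq {x : ℝ} (hx : 0 < x) :
    qDigamma q =ᶠ[𝓝 (x : ℂ)]
      fun z => -Complex.log (1 - q) + (Real.log q : ℂ) * qDigammaSeries q z := by
  have hx' : (0 : ℝ) < (x : ℂ).re := by simpa using hx
  have hslit : ∀ᶠ z in 𝓝 (x : ℂ), qGamma q z ∈ slitPlane :=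
    (hasDerivAt_qGamma hq0 hq1 hx').continuousAt.eventually_mem
      (Complex.isOpen_slitPlane.mem_nhds (qGamma_ofReal_mem_slitPlane hq0 hq1 hx))
  filter_upwards [(isOpen_lt continuous_const Complex.continuous_re).mem_nhds hx', hslit]
    with z hz hzs
  rw [qDigamma, ((hasDerivAt_qGamma hq0 hq1 hz).clog hzs).deriv,
    mul_div_cancel_left₀ _ (Complex.slitPlane_ne_zero hzs)]

end QGamma

section QDigammaOfReal

variable {q : ℝ} (hq0 : 0 < q) (hq1 : q < 1)
include hq0 hq1

lemma summable_pow_div_one_sub_mul_pow_pow {a : ℝ} (ha0 : 0 ≤ a) (ha1 : a < 1) (n : ℕ) :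
    Summable fun k : ℕ => q ^ k / (1 - a * q ^ k) ^ n := by
  refine Summable.of_nonneg_of_le
    (fun k => div_nonneg (by positivity)
      (pow_nonneg (one_sub_mul_pow_pos hq0.le hq1.le ha1 k).le n))
    (fun k => ?_) ((summable_geometric_of_lt_one hq0.le hq1).mul_left ((1 - a) ^ n)⁻¹)
  have hle : 1 - a ≤ 1 - a * q ^ k := by
    nlinarith [pow_le_one₀ hq0.le hq1.le (n := k)]
  rw [← div_eq_inv_mul]
  exact div_le_div_of_nonneg_left (by positivity) (pow_pos (by linarith) n)
    (pow_le_pow_left₀ (by linarith) hle n)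

lemma summable_mul_pow_div_one_sub_mul_pow_pow {a : ℝ} (ha0 : 0 ≤ a) (ha1 : a < 1) (n : ℕ) :
    Summable fun k : ℕ => a * q ^ k / (1 - a * q ^ k) ^ n := by
  simpa only [mul_div_assoc] using
    (summable_pow_div_one_sub_mul_pow_pow hq0 hq1 ha0 ha1 n).mul_left a

variable {x : ℝ} (hx : 0 < x)
include hx

lemma qDigamma_ofReal :
    qDigamma q x = -Complex.log (1 - q)
      + (Real.log q : ℂ) * ((∑' k : ℕ, q ^ x * q ^ k / (1 - q ^ x * q ^ k) : ℝ) : ℂ) := by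
  rw [(qDigamma_eventuallyEq hq0 hq1 hx).eq_of_nhds, qDigammaSeries_ofReal hq0.le]

lemma deriv_qDigamma_ofReal :
    deriv (qDigamma q) x = (Real.log q : ℂ) ^ 2
      * ((∑' k : ℕ, q ^ x * q ^ k / (1 - q ^ x * q ^ k) ^ 2 : ℝ) : ℂ) := by
  have hx' : (0 : ℝ) < (x : ℂ).re := by simpa using hx
  rw [(qDigamma_eventuallyEq hq0 hq1 hx).deriv_eq,
    (((hasDerivAt_qDigammaSeries hq0 hq1 hx').const_mul (Real.log q : ℂ)).const_add _).deriv,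
    Complex.ofReal_tsum]
  simp_rw [cpow_mul_pow_ofReal hq0.le]
  push_cast
  ring

end QDigammaOfReal

section Coefficients

variable {q θ : ℝ} (hq0 : 0 < q) (hq1 : q < 1) (hθ : 0 < θ)
include hq0 hq1 hθ

lemma kappaC_eq : kappaC q θ = ((∑' k : ℕ, q ^ k / (1 - q ^ θ * q ^ k) ^ 2 : ℝ) : ℂ) := by
  have hL : (Real.log q : ℂ) ≠ 0 := by exact_mod_cast (Real.log_neg hq0 hq1).ne
  rw [kappaC, deriv_qDigamma_ofReal hq0 hq1 hθ, ← Complex.ofReal_cpow hq0.le]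
  have hsum : ∑' k : ℕ, q ^ θ * q ^ k / (1 - q ^ θ * q ^ k) ^ 2
      = q ^ θ * ∑' k : ℕ, q ^ k / (1 - q ^ θ * q ^ k) ^ 2 := by
    rw [← tsum_mul_left]
    simp_rw [mul_div_assoc]
  have hqθ' : ((q ^ θ : ℝ) : ℂ) ≠ 0 := by exact_mod_cast (Real.rpow_pos_of_pos hq0 θ).ne'
  rw [hsum, Complex.ofReal_mul]
  field_simp

lemma fC_eq : fC q θ = ((∑' k : ℕ, (q ^ θ * q ^ k) ^ 2 / (1 - q ^ θ * q ^ k) ^ 2 : ℝ) : ℂ) := by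
  have ha0 := Real.rpow_nonneg hq0.le θ
  have ha1 := Real.rpow_lt_one hq0.le hq1 hθ
  have hL : (Real.log q : ℂ) ≠ 0 := by exact_mod_cast (Real.log_neg hq0 hq1).ne
  have hsq : ∀ k : ℕ, (q ^ θ * q ^ k) ^ 2 / (1 - q ^ θ * q ^ k) ^ 2
      = q ^ θ * q ^ k / (1 - q ^ θ * q ^ k) ^ 2 - q ^ θ * q ^ k / (1 - q ^ θ * q ^ k) ^ 1 := by
    intro k
    have := (one_sub_mul_pow_pos hq0.le hq1.le ha1 k).ne'
    field_simp
    ring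
  rw [tsum_congr hsq, (summable_mul_pow_div_one_sub_mul_pow_pow hq0 hq1 ha0 ha1 2).tsum_sub
      (summable_mul_pow_div_one_sub_mul_pow_pow hq0 hq1 ha0 ha1 1),
    fC, deriv_qDigamma_ofReal hq0 hq1 hθ, qDigamma_ofReal hq0 hq1 hθ,
    Complex.ofReal_log (sub_pos.mpr hq1).le]
  simp only [pow_one]
  push_cast
  field_simp
  ring

end Coefficients

local notation "ω" => Complex.exp (Complex.I * (Real.pi / 4))

section Contour

lemma exp_I_pi_div_four_re : (ω).re = √2 / 2 := by
  rw [mul_comm, show (Real.pi / 4 : ℂ) = ((Real.pi / 4 : ℝ) : ℂ) by push_cast; rfl,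
    Complex.exp_ofReal_mul_I_re, Real.cos_pi_div_four]

lemma exp_I_pi_div_four_im : (ω).im = √2 / 2 := by
  rw [mul_comm, show (Real.pi / 4 : ℂ) = ((Real.pi / 4 : ℝ) : ℂ) by push_cast; rfl,
    Complex.exp_ofReal_mul_I_im, Real.sin_pi_div_four]

lemma sqrt_two_div_two_sq : (√2 / 2) ^ 2 = 1 / 2 := by
  rw [div_pow, Real.sq_sqrt zero_le_two]
  norm_num

lemma exp_I_pi_div_four_sq : ω ^ 2 = Complex.I := by
  apply Complex.ext <;>
    simp only [sq, Complex.mul_re, Complex.mul_im, exp_I_pi_div_four_re, exp_I_pi_div_four_im,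
      Complex.I_re, Complex.I_im] <;>
    linarith [sqrt_two_div_two_sq]

lemma exp_I_pi_div_four_mul_conj : ω * (starRingEnd ℂ) ω = 1 := by
  rw [Complex.mul_conj, Complex.normSq_apply, exp_I_pi_div_four_re, exp_I_pi_div_four_im]
  norm_cast
  linarith [sqrt_two_div_two_sq]

variable {a : ℝ} (s t : ℝ)

lemma contour_re : ((a : ℂ) + ω * s).re = a + √2 / 2 * s := by
  simp [exp_I_pi_div_four_re, exp_I_pi_div_four_im]

lemma contour_im : ((a : ℂ) + ω * s).im = √2 / 2 * s := by
  simp [exp_I_pi_div_four_re, exp_I_pi_div_four_im]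

lemma contour_ne_zero {s : ℝ} (hs : 0 < s) : (a : ℂ) + ω * s ≠ 0 := by
  intro h
  have := contour_im (a := a) s
  rw [h, Complex.zero_im] at this
  nlinarith [Real.sqrt_pos.mpr (zero_lt_two : (0 : ℝ) < 2)]

lemma normSq_one_sub_contour_mul :
    Complex.normSq (1 - ((a : ℂ) + ω * s) * t)
      = (1 - a * t - √2 / 2 * s * t) ^ 2 + (√2 / 2 * s * t) ^ 2 := by
  rw [Complex.normSq_apply]
  simp only [Complex.sub_re, Complex.sub_im, Complex.one_re, Complex.one_im, Complex.mul_re,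
    Complex.mul_im, contour_re, contour_im, Complex.ofReal_re, Complex.ofReal_im]
  ring

lemma norm_exp_I_pi_div_four : ‖ω‖ = 1 := by
  simpa using Complex.norm_exp_I_mul_ofReal (Real.pi / 4)

lemma one_sub_contour_mul_mem_slitPlane {t : ℝ} (ht : 0 < t) (hat : a * t < 1) :
    1 - ((a : ℂ) + ω * s) * t ∈ slitPlane := by
  rw [Complex.mem_slitPlane_iff]
  rcases eq_or_ne s 0 with rfl | hs
  · left
    simpa using hat
  · right
    simp only [Complex.sub_im, Complex.one_im, Complex.mul_im, contour_re, contour_im,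
      Complex.ofReal_re, Complex.ofReal_im, mul_zero, zero_sub, zero_add]
    have : (0 : ℝ) < √2 / 2 := by positivity
    exact neg_ne_zero.mpr (mul_ne_zero (mul_ne_zero this.ne' hs) ht.ne')

lemma norm_one_sub_contour_mul_ge (t : ℝ) :
    (1 - a * t) * (√2 / 2) ≤ ‖1 - ((a : ℂ) + ω * s) * t‖ := by
  have hsq : ((1 - a * t) * (√2 / 2)) ^ 2 ≤ ‖1 - ((a : ℂ) + ω * s) * t‖ ^ 2 := by
    rw [Complex.sq_norm, normSq_one_sub_contour_mul, mul_pow, sqrt_two_div_two_sq]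
    nlinarith [sq_nonneg (√2 / 2 * s * t - (1 - a * t) / 2), sqrt_two_div_two_sq]
  exact le_of_sq_le_sq hsq (norm_nonneg _)

variable {q : ℝ} (hq0 : 0 < q) (hq1 : q < 1)
include hq0 hq1

lemma norm_contour_term_le (ha0 : 0 ≤ a) (ha1 : a < 1) (k : ℕ) :
    ‖-(ω * (q : ℂ) ^ k) / (1 - ((a : ℂ) + ω * s) * (q : ℂ) ^ k)‖
      ≤ ((1 - a) * (√2 / 2))⁻¹ * q ^ k := by
  have hat : a * q ^ k ≤ a := mul_le_of_le_one_right ha0 (pow_le_one₀ hq0.le hq1.le)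
  have hr : (0 : ℝ) < (1 - a) * (√2 / 2) := by have := sub_pos.mpr ha1; positivity
  rw [← Complex.ofReal_pow, norm_div, norm_neg, norm_mul, norm_exp_I_pi_div_four, one_mul,
    Complex.norm_real, Real.norm_of_nonneg (pow_nonneg hq0.le k), inv_mul_eq_div]
  exact div_le_div_of_nonneg_left (pow_nonneg hq0.le k) hr
    ((mul_le_mul_of_nonneg_right (by linarith) (by positivity)).trans
      (norm_one_sub_contour_mul_ge s _))

lemma hasDerivAt_tsum_log_one_sub_contour_mul_pow (ha0 : 0 ≤ a) (ha1 : a < 1) :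
    HasDerivAt (fun s : ℝ => ∑' k : ℕ, Complex.log (1 - ((a : ℂ) + ω * s) * (q : ℂ) ^ k))
      (∑' k : ℕ, -(ω * (q : ℂ) ^ k) / (1 - ((a : ℂ) + ω * s) * (q : ℂ) ^ k)) s := by
  have hterm : ∀ (k : ℕ) (y : ℝ), HasDerivAt
      (fun s : ℝ => Complex.log (1 - ((a : ℂ) + ω * s) * (q : ℂ) ^ k))
      (-(ω * (q : ℂ) ^ k) / (1 - ((a : ℂ) + ω * y) * (q : ℂ) ^ k)) y := by
    intro k y
    have hA : HasDerivAt (fun s : ℝ => 1 - ((a : ℂ) + ω * s) * (q : ℂ) ^ k)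
        (-(ω * (q : ℂ) ^ k)) y := by
      simpa using ((((hasDerivAt_id y).ofReal_comp).const_mul ω).const_add (a : ℂ)).mul_const
        ((q : ℂ) ^ k) |>.const_sub 1
    rw [← Complex.ofReal_pow] at hA ⊢
    exact hA.clog_real (one_sub_contour_mul_mem_slitPlane y (pow_pos hq0 k)
      ((mul_le_of_le_one_right ha0 (pow_le_one₀ hq0.le hq1.le)).trans_lt ha1))
  exact hasDerivAt_tsum ((summable_geometric_of_lt_one hq0.le hq1).mul_left _) hterm
    (fun k y => norm_contour_term_le y hq0 hq1 ha0 ha1 k) (y₀ := 0)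
    (summable_log_one_sub_mul_pow _ (by simpa [abs_of_pos hq0] using hq1)) s

end Contour

section ContourAlgebra

variable (a t s : ℝ)

lemma contour_term_eq (hc : 1 - a * t ≠ 0) (hA : (a : ℂ) + ω * s ≠ 0)
    (hB : 1 - ((a : ℂ) + ω * s) * t ≠ 0) :
    -(((a * t) ^ 2 / (1 - a * t) ^ 2 : ℝ) : ℂ) * (ω / ((a : ℂ) + ω * s))
      + ((t / (1 - a * t) ^ 2 : ℝ) : ℂ) * ω + -(ω * t) / (1 - ((a : ℂ) + ω * s) * t)
      = ((t ^ 2 * s ^ 2 / (1 - a * t) ^ 2 : ℝ) : ℂ)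
        * (-ω ^ 3 / (((a : ℂ) + ω * s) * (1 - ((a : ℂ) + ω * s) * t))) := by
  have hc' : (1 : ℂ) - a * t ≠ 0 := by exact_mod_cast hc
  push_cast
  generalize ω = w at hA hB ⊢
  generalize hAdef : (a : ℂ) + w * s = A at hA hB ⊢
  generalize hBdef : 1 - A * t = B at hB ⊢
  field_simp
  subst hAdef hBdef
  ring

lemma re_neg_exp_cube_div (hA : (a : ℂ) + ω * s ≠ 0) (hB : 1 - ((a : ℂ) + ω * s) * t ≠ 0) :
    (-ω ^ 3 / (((a : ℂ) + ω * s) * (1 - ((a : ℂ) + ω * s) * t))).re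
      = √2 / 2 * (t * s ^ 2 + a * (1 - a * t))
        / (Complex.normSq ((a : ℂ) + ω * s) * Complex.normSq (1 - ((a : ℂ) + ω * s) * t)) := by
  set A : ℂ := (a : ℂ) + ω * s
  set B : ℂ := 1 - A * t
  have hconj : -ω ^ 3 / (A * B) = -ω ^ 3 * (starRingEnd ℂ A) * (starRingEnd ℂ B)
      / ((Complex.normSq A * Complex.normSq B : ℝ) : ℂ) := by
    have hA' : starRingEnd ℂ A ≠ 0 := (map_ne_zero _).mpr hA
    have hB' : starRingEnd ℂ B ≠ 0 := (map_ne_zero _).mpr hB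
    rw [Complex.ofReal_mul, ← Complex.mul_conj A, ← Complex.mul_conj B]
    field_simp
  have hexpand : -ω ^ 3 * (starRingEnd ℂ A) * (starRingEnd ℂ B)
      = ((-(a * (1 - a * t)) : ℝ) : ℂ) * (Complex.I * ω)
        + ((a * s * t - s * (1 - a * t) : ℝ) : ℂ) * Complex.I + ((s ^ 2 * t : ℝ) : ℂ) * ω := by
    simp only [A, B, map_sub, map_add, map_mul, map_one, Complex.conj_ofReal]
    push_cast
    linear_combination
      (-(a * (1 - a * t)) * ω + (a * s * t - s * (1 - a * t))) * exp_I_pi_div_four_sq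
        + ((a * s * t - s * (1 - a * t)) * ω ^ 2 + s ^ 2 * t * ω * (ω * starRingEnd ℂ ω + 1))
          * exp_I_pi_div_four_mul_conj
  rw [hconj, Complex.div_ofReal_re, hexpand]
  simp only [Complex.add_re, Complex.mul_re, Complex.mul_im, Complex.ofReal_re,
    Complex.ofReal_im, Complex.I_re, Complex.I_im, exp_I_pi_div_four_re, exp_I_pi_div_four_im]
  ring

end ContourAlgebra

noncomputable def f0ContourSlope (q θ s : ℝ) : ℝ :=
  (-fC q θ * (ω / (((q ^ θ : ℝ) : ℂ) + ω * s)) + kappaC q θ * ω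
    + ∑' k : ℕ, -(ω * (q : ℂ) ^ k) / (1 - (((q ^ θ : ℝ) : ℂ) + ω * s) * (q : ℂ) ^ k)).re

noncomputable def f0ContourSlopeTerm (q θ s : ℝ) (k : ℕ) : ℝ :=
  q ^ (2 * k) * s ^ 2 * (Real.sqrt 2 / 2) *
      (q ^ (k : ℝ) * s ^ 2 + q ^ θ * (1 - q ^ (θ + (k : ℝ)))) /
    ((1 - q ^ (θ + (k : ℝ))) ^ 2 *
      ‖(1 - (q : ℂ) ^ ((θ : ℂ) + (k : ℂ))
        - Complex.exp (Complex.I * (Real.pi / 4)) * s * (q : ℂ) ^ (k : ℕ) : ℂ)‖ ^ 2 *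
      ‖((q : ℂ) ^ (θ : ℂ) + Complex.exp (Complex.I * (Real.pi / 4)) * s : ℂ)‖ ^ 2)

section SteepDescent

variable {q θ : ℝ}

lemma f0ContourSlopeTerm_eq (hq0 : 0 < q) (s : ℝ) (k : ℕ) :
    f0ContourSlopeTerm q θ s k = (q ^ k) ^ 2 * s ^ 2 / (1 - q ^ θ * q ^ k) ^ 2
      * (√2 / 2 * (q ^ k * s ^ 2 + q ^ θ * (1 - q ^ θ * q ^ k))
        / (Complex.normSq (((q ^ θ : ℝ) : ℂ) + ω * s)
          * Complex.normSq (1 - (((q ^ θ : ℝ) : ℂ) + ω * s) * ((q ^ k : ℝ) : ℂ)))) := by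
  have hpow : (q : ℂ) ^ ((θ : ℂ) + (k : ℂ)) = ((q ^ θ * q ^ k : ℝ) : ℂ) := by
    rw [← cpow_mul_pow_ofReal hq0.le, Complex.cpow_add _ _ (by exact_mod_cast hq0.ne'),
      Complex.cpow_natCast]
  have hB : 1 - ((q ^ θ * q ^ k : ℝ) : ℂ) - ω * s * (q : ℂ) ^ k
      = 1 - (((q ^ θ : ℝ) : ℂ) + ω * s) * ((q ^ k : ℝ) : ℂ) := by
    push_cast
    ring
  rw [f0ContourSlopeTerm, hpow, hB, Real.rpow_add hq0, Real.rpow_natCast,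
    ← Complex.ofReal_cpow hq0.le, Complex.sq_norm, Complex.sq_norm, pow_mul', div_mul_div_comm]
  congr 1 <;> ring

lemma Wc_of_pos (hq0 : 0 < q) {s : ℝ} (hs : 0 < s) :
    Wc q θ s = Complex.log (((q ^ θ : ℝ) : ℂ) + ω * s) / (Real.log q : ℂ) := by
  rw [Wc, abs_of_pos hs, Real.sign_of_pos hs, ← Complex.ofReal_cpow hq0.le]
  push_cast
  rw [mul_one, mul_comm (s : ℂ)]

variable (hq0 : 0 < q) (hq1 : q < 1) (hθ : 0 < θ)
include hq0 hq1 hθ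

lemma f0ContourSlopeTerm_pos {s : ℝ} (hs : 0 < s) (k : ℕ) : 0 < f0ContourSlopeTerm q θ s k := by
  have ha := Real.rpow_pos_of_pos hq0 θ
  have hc := one_sub_mul_pow_pos hq0.le hq1.le (Real.rpow_lt_one hq0.le hq1 hθ) k
  have hB := Complex.slitPlane_ne_zero (one_sub_contour_mul_mem_slitPlane s (pow_pos hq0 k)
    (sub_pos.mp hc))
  rw [f0ContourSlopeTerm_eq hq0]
  exact mul_pos (div_pos (by positivity) (pow_pos hc 2))
    (div_pos (by positivity) (mul_pos (Complex.normSq_pos.mpr (contour_ne_zero hs))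
      (Complex.normSq_pos.mpr hB)))

lemma re_f0_Wc {s : ℝ} (hs : 0 < s) :
    (f0 q θ (Wc q θ s)).re
      = (-fC q θ * Complex.log (((q ^ θ : ℝ) : ℂ) + ω * s)
        + kappaC q θ * (((q ^ θ : ℝ) : ℂ) + ω * s)
        + ∑' k : ℕ, Complex.log (1 - (((q ^ θ : ℝ) : ℂ) + ω * s) * (q : ℂ) ^ k)).re := by
  have hL : (Real.log q : ℂ) ≠ 0 := by exact_mod_cast (Real.log_neg hq0 hq1).ne
  have hq : ‖(q : ℂ)‖ < 1 := by rwa [Complex.norm_real, Real.norm_of_nonneg hq0.le]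
  have hB : ∀ k : ℕ, 1 - (((q ^ θ : ℝ) : ℂ) + ω * s) * (q : ℂ) ^ k ≠ 0 := fun k => by
    rw [← Complex.ofReal_pow]
    exact Complex.slitPlane_ne_zero (one_sub_contour_mul_mem_slitPlane s (pow_pos hq0 k)
      ((mul_le_of_le_one_right (Real.rpow_nonneg hq0.le θ) (pow_le_one₀ hq0.le hq1.le)).trans_lt
        (Real.rpow_lt_one hq0.le hq1 hθ)))
  have hqW : (q : ℂ) ^ Wc q θ s = ((q ^ θ : ℝ) : ℂ) + ω * s := by
    rw [Wc_of_pos hq0 hs, Complex.cpow_def_of_ne_zero (by exact_mod_cast hq0.ne'),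
      ← Complex.ofReal_log hq0.le, mul_div_cancel₀ _ hL, Complex.exp_log (contour_ne_zero hs)]
  rw [f0, hqW, qPoch_eq_exp_tsum_log hq hB, mul_assoc (-fC q θ), Wc_of_pos hq0 hs,
    mul_div_cancel₀ _ hL]
  simp only [Complex.add_re]
  rw [Complex.log_re, Complex.norm_exp, Real.log_exp]

lemma hasDerivAt_re_f0_Wc {s : ℝ} (hs : 0 < s) :
    HasDerivAt (fun u => (f0 q θ (Wc q θ u)).re) (f0ContourSlope q θ s) s := by
  have hA : HasDerivAt (fun u : ℝ => ((q ^ θ : ℝ) : ℂ) + ω * u) ω s := by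
    simpa using (((hasDerivAt_id s).ofReal_comp).const_mul ω).const_add ((q ^ θ : ℝ) : ℂ)
  have hslit : ((q ^ θ : ℝ) : ℂ) + ω * s ∈ slitPlane :=
    Complex.mem_slitPlane_iff.mpr (Or.inr (by rw [contour_im]; positivity))
  have hΦ := (((hA.clog_real hslit).const_mul (-fC q θ)).add (hA.const_mul (kappaC q θ))).add
    (hasDerivAt_tsum_log_one_sub_contour_mul_pow s hq0 hq1 (Real.rpow_nonneg hq0.le θ)
      (Real.rpow_lt_one hq0.le hq1 hθ))
  refine (Complex.reCLM.hasFDerivAt.comp_hasDerivAt s hΦ).congr_of_eventuallyEq ?_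
  filter_upwards [Ioi_mem_nhds hs] with u hu
  exact re_f0_Wc hq0 hq1 hθ hu

lemma hasSum_f0ContourSlopeTerm {s : ℝ} (hs : 0 < s) :
    HasSum (f0ContourSlopeTerm q θ s) (f0ContourSlope q θ s) := by
  have ha0 := Real.rpow_nonneg hq0.le θ
  have ha1 := Real.rpow_lt_one hq0.le hq1 hθ
  have hc := one_sub_mul_pow_pos hq0.le hq1.le ha1
  have hv := summable_pow_div_one_sub_mul_pow_pow hq0 hq1 ha0 ha1 2
  have hu : Summable fun k : ℕ => (q ^ θ * q ^ k) ^ 2 / (1 - q ^ θ * q ^ k) ^ 2 := by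
    refine hv.of_nonneg_of_le (fun k => by positivity) fun k =>
      div_le_div_of_nonneg_right ?_ (pow_nonneg (hc k).le 2)
    have hk := pow_le_one₀ (n := k) hq0.le hq1.le
    have := pow_pos hq0 k
    nlinarith [mul_le_of_le_one_right ha0 hk, mul_nonneg ha0 this.le]
  have hg := Summable.of_norm_bounded ((summable_geometric_of_lt_one hq0.le hq1).mul_left _)
    (norm_contour_term_le s hq0 hq1 ha0 ha1)
  rw [f0ContourSlope, fC_eq hq0 hq1 hθ, kappaC_eq hq0 hq1 hθ]
  convert Complex.hasSum_re ((((Complex.hasSum_ofReal.mpr hu.hasSum).neg.mul_right _).add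
    ((Complex.hasSum_ofReal.mpr hv.hasSum).mul_right ω)).add hg.hasSum) using 1
  funext k
  have hB := Complex.slitPlane_ne_zero (one_sub_contour_mul_mem_slitPlane s (pow_pos hq0 k)
    (sub_pos.mp (hc k)))
  rw [← Complex.ofReal_pow, contour_term_eq _ _ _ (hc k).ne' (contour_ne_zero hs) hB,
    Complex.re_ofReal_mul, re_neg_exp_cube_div _ _ _ (contour_ne_zero hs) hB,
    f0ContourSlopeTerm_eq hq0]

end SteepDescent

theorem f0_steep_descent (q θ : ℝ) (hq0 : 0 < q) (hq1 : q < 1) (hθ : 0 < θ) :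
    (∀ s : ℝ, 0 < s →
      deriv (fun u : ℝ => (f0 q θ (Wc q θ u)).re) s =
        ∑' k : ℕ, q ^ (2 * k) * s ^ 2 * (Real.sqrt 2 / 2) *
            (q ^ (k : ℝ) * s ^ 2 + q ^ θ * (1 - q ^ (θ + (k : ℝ)))) /
          ((1 - q ^ (θ + (k : ℝ))) ^ 2 *
            ‖(1 - (q : ℂ) ^ ((θ : ℂ) + (k : ℂ))
              - Complex.exp (Complex.I * (Real.pi / 4)) * s * (q : ℂ) ^ (k : ℕ) : ℂ)‖ ^ 2 *
            ‖((q : ℂ) ^ (θ : ℂ) + Complex.exp (Complex.I * (Real.pi / 4)) * s : ℂ)‖ ^ 2) ∧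
      0 < ∑' k : ℕ, q ^ (2 * k) * s ^ 2 * (Real.sqrt 2 / 2) *
            (q ^ (k : ℝ) * s ^ 2 + q ^ θ * (1 - q ^ (θ + (k : ℝ)))) /
          ((1 - q ^ (θ + (k : ℝ))) ^ 2 *
            ‖(1 - (q : ℂ) ^ ((θ : ℂ) + (k : ℂ))
              - Complex.exp (Complex.I * (Real.pi / 4)) * s * (q : ℂ) ^ (k : ℕ) : ℂ)‖ ^ 2 *
            ‖((q : ℂ) ^ (θ : ℂ) + Complex.exp (Complex.I * (Real.pi / 4)) * s : ℂ)‖ ^ 2))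
    ∧ StrictMonoOn (fun s : ℝ => (f0 q θ (Wc q θ s)).re) (Set.Ioi 0) := by
  have hderiv : ∀ s : ℝ, 0 < s →
      HasDerivAt (fun u => (f0 q θ (Wc q θ u)).re) (∑' k : ℕ, f0ContourSlopeTerm q θ s k) s :=
    fun s hs => (hasSum_f0ContourSlopeTerm hq0 hq1 hθ hs).tsum_eq ▸
      hasDerivAt_re_f0_Wc hq0 hq1 hθ hs
  have hpos : ∀ s : ℝ, 0 < s → 0 < ∑' k : ℕ, f0ContourSlopeTerm q θ s k := fun s hs =>
    (hasSum_f0ContourSlopeTerm hq0 hq1 hθ hs).summable.tsum_pos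
      (fun k => (f0ContourSlopeTerm_pos hq0 hq1 hθ hs k).le) 0
      (f0ContourSlopeTerm_pos hq0 hq1 hθ hs 0)
  refine ⟨fun s hs => ⟨(hderiv s hs).deriv, hpos s hs⟩,
    strictMonoOn_of_deriv_pos (convex_Ioi 0)
      (fun s hs => (hderiv s hs).continuousAt.continuousWithinAt) fun s hs => ?_⟩
  rw [interior_Ioi] at hs
  rw [(hderiv s hs).deriv]
  exact hpos s hs
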